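/- Let X be a compact Riemann surface of genus g ≥ 2 and L a line bundle on X with deg L < 0. Let F be a rank 2 vector bundle fitting in a short exact sequence 0 → L₁ → F → Q → 0 with L₁ a line bundle of negative degree, and suppose h⁰(F ⊗ L^∨ ⊗ K_X) ≥ 2g − 2 + deg F + 2 deg L^∨ > 0 where deg F = −deg L > 0. Then h⁰(L₁ ⊗ L^∨ ⊗ K_X) < h⁰(F ⊗ L^∨ ⊗ K_X); in particular the map H⁰(L₁ ⊗ L^∨ ⊗ K_X) → H⁰(F ⊗ L^∨ ⊗ K_X) is not surjective. -/

import Mathlib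

/-!
Put `N = L₁ ⊗ L^∨ ⊗ K_X`, of degree `deg L₁ - deg L + 2g - 2`. Either `h⁰(N) = 0`, or `N` is
nonspecial and Riemann–Roch computes `h⁰(N)`, or Clifford bounds `h⁰(N)` by `deg N / 2 + 1`.
Since `deg L₁ < 0` and `deg L < 0`, each of these is below `2g - 2 - 3 deg L ≤ h⁰(F ⊗ L^∨ ⊗ K_X)`.
-/

section RiemannRochClifford

variable {Pic : Type*} [CommGroup Pic] (deg : Pic → ℤ) (K : Pic) (h0 : Pic → ℕ) (g : ℤ)

theorem h0_eq_zero_or_nonspecial_or_clifford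
    (hRR : ∀ N : Pic, (h0 N : ℤ) - (h0 (K * N⁻¹) : ℤ) = deg N + 1 - g)
    (hcliff : ∀ N : Pic, h0 N ≠ 0 → h0 (K * N⁻¹) ≠ 0 → 2 * ((h0 N : ℤ) - 1) ≤ deg N)
    (N : Pic) :
    h0 N = 0 ∨ (h0 N : ℤ) = deg N + 1 - g ∨ 2 * ((h0 N : ℤ) - 1) ≤ deg N := by
  by_cases hN : h0 N = 0
  · exact .inl hN
  by_cases hKN : h0 (K * N⁻¹) = 0
  · right; left
    simpa [hKN] using hRR N
  · exact .inr <| .inr <| hcliff N hN hKN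

end RiemannRochClifford

theorem h0_sub_line_bundle_lt_h0_rank_two_general
    (g : ℤ)
    (Pic : Type*) [CommGroup Pic]
    (deg : Pic → ℤ)
    (hdeg_mul : ∀ L M : Pic, deg (L * M) = deg L + deg M)
    (hdeg_inv : ∀ L : Pic, deg L⁻¹ = - deg L)
    (K : Pic) (hK : deg K = 2 * g - 2)
    (h0 : Pic → ℕ)
    (hRR : ∀ N : Pic, (h0 N : ℤ) - (h0 (K * N⁻¹) : ℤ) = deg N + 1 - g)
    (hcliff : ∀ N : Pic, h0 N ≠ 0 → h0 (K * N⁻¹) ≠ 0 → 2 * ((h0 N : ℤ) - 1) ≤ deg N)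
    -- the data of the statement
    (L L1 : Pic) (hL : deg L < 0) (hL1 : deg L1 < 0)
    (degF : ℤ) (hdegF : degF = - deg L)
    (h0F : ℕ)                          -- h⁰(F ⊗ L^∨ ⊗ K_X)
    (hh0F : 2 * g - 2 + degF + 2 * (- deg L) ≤ (h0F : ℤ))
    (hh0Fpos : 0 < 2 * g - 2 + degF + 2 * (- deg L)) :
    (h0 (L1 * L⁻¹ * K) : ℤ) < (h0F : ℤ) ∧
      ∀ (V W : Type) [AddCommGroup V] [Module ℂ V] [AddCommGroup W] [Module ℂ W]
        [FiniteDimensional ℂ V] [FiniteDimensional ℂ W],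
        Module.finrank ℂ V = h0 (L1 * L⁻¹ * K) → Module.finrank ℂ W = h0F →
        ∀ f : V →ₗ[ℂ] W, ¬ Function.Surjective f := by
  have hdegN : deg (L1 * L⁻¹ * K) = deg L1 - deg L + (2 * g - 2) := by
    rw [hdeg_mul, hdeg_mul, hdeg_inv, hK]; ring
  have hlt : (h0 (L1 * L⁻¹ * K) : ℤ) < h0F := by
    rcases h0_eq_zero_or_nonspecial_or_clifford deg K h0 g hRR hcliff (L1 * L⁻¹ * K) with
      hzero | hnonspecial | hclifford
    · rw [hzero]; push_cast; linarith
    · linarith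
    · linarith
  refine ⟨hlt, fun V W _ _ _ _ _ _ hV hW f hf => ?_⟩
  have := LinearMap.finrank_le_finrank_of_surjective hf
  omega

/-- Let `X` be a compact Riemann surface of genus `g ≥ 2`, `L` a line bundle
with `deg L < 0`, and `F` a rank-2 bundle fitting in `0 → L₁ → F → Q → 0` with `deg L₁ < 0`,
with `deg F = −deg L > 0` and `h⁰(F ⊗ L^∨ ⊗ K_X) ≥ 2g−2+deg F+2 deg L^∨ > 0`.  Then
`h⁰(L₁ ⊗ L^∨ ⊗ K_X) < h⁰(F ⊗ L^∨ ⊗ K_X)`; in particular any linear map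
`H⁰(L₁ ⊗ L^∨ ⊗ K_X) → H⁰(F ⊗ L^∨ ⊗ K_X)` is not surjective.

The curve is encoded through its Picard group `Pic`, degree homomorphism `deg`, canonical
bundle `K` (of degree `2g−2`), and the dimension function `h0` of spaces of global sections
of line bundles, satisfying: vanishing in negative degree, Riemann–Roch (with
`h¹(N) = h⁰(K ⊗ N^∨)` by Serre duality), and Clifford's inequality for special bundles. -/
theorem h0_sub_line_bundle_lt_h0_rank_two
    (g : ℤ) (hg : 2 ≤ g)
    (Pic : Type*) [CommGroup Pic]
    (deg : Pic → ℤ)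
    (hdeg_mul : ∀ L M : Pic, deg (L * M) = deg L + deg M)
    (hdeg_inv : ∀ L : Pic, deg L⁻¹ = - deg L)
    (K : Pic) (hK : deg K = 2 * g - 2)
    (h0 : Pic → ℕ)
    (hvanish : ∀ N : Pic, deg N < 0 → h0 N = 0)
    (hRR : ∀ N : Pic, (h0 N : ℤ) - (h0 (K * N⁻¹) : ℤ) = deg N + 1 - g)
    (hcliff : ∀ N : Pic, h0 N ≠ 0 → h0 (K * N⁻¹) ≠ 0 → 2 * ((h0 N : ℤ) - 1) ≤ deg N)
    -- the data of the statement
    (L L1 Q : Pic) (hL : deg L < 0) (hL1 : deg L1 < 0)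
    (degF : ℤ) (hdegF : degF = - deg L)
    (hQ : deg Q = degF - deg L1)      -- from the exact sequence 0 → L₁ → F → Q → 0
    (h0F : ℕ)                          -- h⁰(F ⊗ L^∨ ⊗ K_X)
    (hh0F : 2 * g - 2 + degF + 2 * (- deg L) ≤ (h0F : ℤ))
    (hh0Fpos : 0 < 2 * g - 2 + degF + 2 * (- deg L)) :
    (h0 (L1 * L⁻¹ * K) : ℤ) < (h0F : ℤ) ∧
      ∀ (V W : Type) [AddCommGroup V] [Module ℂ V] [AddCommGroup W] [Module ℂ W]
        [FiniteDimensional ℂ V] [FiniteDimensional ℂ W],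
        Module.finrank ℂ V = h0 (L1 * L⁻¹ * K) → Module.finrank ℂ W = h0F →
        ∀ f : V →ₗ[ℂ] W, ¬ Function.Surjective f :=
  h0_sub_line_bundle_lt_h0_rank_two_general g Pic deg hdeg_mul hdeg_inv K hK h0 hRR hcliff L L1 hL
    hL1 degF hdegF h0F hh0F hh0Fpos
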